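/- arXiv:2212.00469 — 2 statements merged into one kernel-verified Lean document; each statement's English description precedes it below -/
import Mathlib

section
/- Suppose N₁, N₂, n₁, n₂ are positive reals with n₁ ≤ N₁ and n₂ ≤ N₂, and real scores x, y ∈ [0,1] satisfy x(N₁ - n₁) + y·n₁ = n₁ and x(N₂ - n₂) + y·n₂ = n₂. Then either n₁/N₁ = n₂/N₂ (equal base rates), or (x, y) = (0, 1) (perfect prediction). -/
theorem stmt_0 (N₁ N₂ n₁ n₂ x y : ℝ)
    (hN₁ : 0 < N₁) (hN₂ : 0 < N₂) (hn₁ : 0 < n₁) (hn₂ : 0 < n₂)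
    (h₁ : n₁ ≤ N₁) (h₂ : n₂ ≤ N₂)
    (hx : x ∈ Set.Icc (0:ℝ) 1) (hy : y ∈ Set.Icc (0:ℝ) 1)
    (e₁ : x * (N₁ - n₁) + y * n₁ = n₁)
    (e₂ : x * (N₂ - n₂) + y * n₂ = n₂) :
    n₁ / N₁ = n₂ / N₂ ∨ (x = 0 ∧ y = 1) := by
  rcases eq_or_lt_of_le hx.1 with hx0 | hx0
  · right
    refine ⟨hx0.symm, ?_⟩
    rw [← hx0] at e₁
    simp at e₁
    have : y * n₁ = 1 * n₁ := by linarith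
    exact mul_right_cancel₀ (ne_of_gt hn₁) this
  · left
    have hden : x + (1 - y) > 0 := by
      have := hy.2; linarith
    have hN₁' : N₁ * x = n₁ * (x + (1 - y)) := by ring_nf; nlinarith [e₁]
    have hN₂' : N₂ * x = n₂ * (x + (1 - y)) := by ring_nf; nlinarith [e₂]
    rw [div_eq_div_iff (ne_of_gt hN₁) (ne_of_gt hN₂)]
    have : (n₁ * N₂ - n₂ * N₁) * x = 0 := by nlinarith [hN₁', hN₂']
    have := mul_eq_zero.mp this
    rcases this with h | h
    · linarith
    · exact absurd h (ne_of_gt hx0)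
end

section
/- If n₁/N₁ = n₂/N₂ with N₁, N₂, n₁, n₂ > 0, then x = y = n₁/N₁ solves the system x(N₁ - n₁) + y·n₁ = n₁ and x(N₂ - n₂) + y·n₂ = n₂; moreover, the solution set is infinite (there exist infinitely many pairs (x, y) solving the system). -/
/-!
With equal base rates the two equations are proportional: the second is `n₂ / n₁` times the
first. The system therefore describes a single line, which contains the point `x = y = n₁ / N₁`
and, since the coefficient of `y` is nonzero, infinitely many points.
-/

section LinearEquation

variable {K : Type*} [Field K]

theorem infinite_setOf_linear_eq [Infinite K] (a : K) {b : K} (hb : b ≠ 0) (c : K) :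
    {p : K × K | p.1 * a + p.2 * b = c}.Infinite := by
  refine Set.infinite_of_injective_forall_mem (f := fun t : K => (t, (c - t * a) / b)) ?_ ?_
  · intro s t hst
    exact congrArg Prod.fst hst
  · intro t
    change t * a + (c - t * a) / b * b = c
    rw [div_mul_cancel₀ _ hb, add_sub_cancel]

theorem setOf_linear_eq_and_mul_linear_eq (a b c r : K) :
    {p : K × K | p.1 * a + p.2 * b = c ∧ p.1 * (r * a) + p.2 * (r * b) = r * c} =
      {p : K × K | p.1 * a + p.2 * b = c} := by
  ext p
  refine ⟨And.left, fun h => ⟨h, ?_⟩⟩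
  rw [← h]
  ring

end LinearEquation

theorem stmt_3_general (N₁ N₂ n₁ n₂ : ℝ)
    (hN₁ : 0 < N₁) (hN₂ : 0 < N₂) (hn₁ : 0 < n₁)
    (hbr : n₁ / N₁ = n₂ / N₂) :
    ((n₁ / N₁) * (N₁ - n₁) + (n₁ / N₁) * n₁ = n₁ ∧
      (n₁ / N₁) * (N₂ - n₂) + (n₁ / N₁) * n₂ = n₂) ∧
    {p : ℝ × ℝ | p.1 * (N₁ - n₁) + p.2 * n₁ = n₁ ∧
      p.1 * (N₂ - n₂) + p.2 * n₂ = n₂}.Infinite := by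
  refine ⟨⟨?_, ?_⟩, ?_⟩
  · rw [← mul_add, sub_add_cancel, div_mul_cancel₀ _ hN₁.ne']
  · rw [← mul_add, sub_add_cancel, hbr, div_mul_cancel₀ _ hN₂.ne']
  · obtain ⟨r, rfl⟩ : ∃ r, n₂ = r * n₁ := ⟨n₂ / n₁, (div_mul_cancel₀ _ hn₁.ne').symm⟩
    obtain rfl : N₂ = r * N₁ := by
      rw [div_eq_div_iff hN₁.ne' hN₂.ne'] at hbr
      exact mul_left_cancel₀ hn₁.ne' (by linear_combination hbr)
    rw [← mul_sub, setOf_linear_eq_and_mul_linear_eq]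
    exact infinite_setOf_linear_eq _ hn₁.ne' _

theorem stmt_3 (N₁ N₂ n₁ n₂ : ℝ)
    (hN₁ : 0 < N₁) (hN₂ : 0 < N₂) (hn₁ : 0 < n₁) (hn₂ : 0 < n₂)
    (hbr : n₁ / N₁ = n₂ / N₂) :
    ((n₁ / N₁) * (N₁ - n₁) + (n₁ / N₁) * n₁ = n₁ ∧
      (n₁ / N₁) * (N₂ - n₂) + (n₁ / N₁) * n₂ = n₂) ∧
    {p : ℝ × ℝ | p.1 * (N₁ - n₁) + p.2 * n₁ = n₁ ∧
      p.1 * (N₂ - n₂) + p.2 * n₂ = n₂}.Infinite :=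
  stmt_3_general N₁ N₂ n₁ n₂ hN₁ hN₂ hn₁ hbr
end
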